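/- Let Φ be an irreducible reduced root system with positive roots Φ⁺ in a Euclidean space V, and let w be an element of the Weyl group not contained in any proper standard parabolic subgroup (i.e., the smallest standard parabolic containing w is the whole group). Then the roots α ∈ Φ⁺ with w⁻¹α < 0 span V. -/

import Mathlib

/-!
Write `N(u)` for the inversion set `{α > 0 | u α < 0}` and induct on its size. If `β ≺ α` with
`α ∈ N(u)`, then `u` sends some simple root `δ` to a negative root (otherwise `u` would keep
every positive root positive), so `δ ∈ N(u)`. If `β = δ` we are done. Otherwise the simple
reflection `s = s_δ` permutes the positive roots other than `δ` and does not change the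
coefficient of `β`, so `β ≺ s α` with `s α ∈ N(u s)`, while `s` maps `N(u s)` injectively into
`N(u) \ {δ}`. By induction `β` lies in the span of `N(u s)`, which is contained in the span of
`N(u)` because `s γ - γ` is a multiple of `δ ∈ N(u)`.
-/

open RealInnerProductSpace

/-- A reduced crystallographic root system `Φ` in a real inner product space,
together with a base `Δ` (set of simple roots), so that every root is either a
nonnegative or a nonpositive combination of the simple roots. -/
structure RootSystemBase (V : Type*) [NormedAddCommGroup V] [InnerProductSpace ℝ V] where
  /-- the (finite) set of roots -/
  Φ : Finset V
  /-- the base (set of simple roots) -/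
  Δ : Finset V
  ne_zero : ∀ α ∈ Φ, α ≠ (0 : V)
  base_sub : Δ ⊆ Φ
  /-- `Φ` is stable under the reflection in each root -/
  reflect_mem : ∀ α ∈ Φ, ∀ β ∈ Φ, β - (2 * ⟪β, α⟫ / ⟪α, α⟫) • α ∈ Φ
  /-- crystallographic condition: all Cartan pairings are integers -/
  crystal : ∀ α ∈ Φ, ∀ β ∈ Φ, ∃ n : ℤ, 2 * ⟪β, α⟫ / ⟪α, α⟫ = (n : ℝ)
  /-- reduced: the only multiples of a root which are roots are `±` itself -/
  reduced : ∀ α ∈ Φ, ∀ t : ℝ, t • α ∈ Φ → t = 1 ∨ t = -1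
  base_indep : LinearIndependent ℝ (Subtype.val : {x // x ∈ Δ} → V)
  /-- every root is a nonnegative or nonpositive combination of simple roots -/
  pos_or_neg : ∀ α ∈ Φ,
    (∃ c : V → ℝ, (∀ d, 0 ≤ c d) ∧ α = ∑ d ∈ Δ, c d • d) ∨
    (∃ c : V → ℝ, (∀ d, 0 ≤ c d) ∧ α = -(∑ d ∈ Δ, c d • d))

namespace RootSystemBase

variable {V : Type*} [NormedAddCommGroup V] [InnerProductSpace ℝ V]

/-- `α` is a positive root: a root which is a nonnegative combination of simple roots. -/
def IsPos (R : RootSystemBase V) (α : V) : Prop :=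
  α ∈ R.Φ ∧ ∃ c : V → ℝ, (∀ d, 0 ≤ c d) ∧ α = ∑ d ∈ R.Δ, c d • d

/-- `α` is a negative root: a root which is a nonpositive combination of simple roots. -/
def IsNeg (R : RootSystemBase V) (α : V) : Prop :=
  α ∈ R.Φ ∧ ∃ c : V → ℝ, (∀ d, 0 ≤ c d) ∧ α = -(∑ d ∈ R.Δ, c d • d)

/-- `δ ≺ α` : the simple root `δ` occurs with positive coefficient in `α`. -/
def Prec (R : RootSystemBase V) (δ α : V) : Prop :=
  ∃ c : V → ℝ, (∀ d, 0 ≤ c d) ∧ α = ∑ d ∈ R.Δ, c d • d ∧ 0 < c δ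

end RootSystemBase

namespace RootSystemBase

variable {V : Type*} [NormedAddCommGroup V] [InnerProductSpace ℝ V]

section Reflection

noncomputable def reflectionIn {δ : V} (hδ : δ ≠ 0) : V ≃ₗ[ℝ] V :=
  Module.reflection (x := δ) (f := (2 / ⟪δ, δ⟫) • innerₛₗ ℝ δ) (by
    have : ‖δ‖ ≠ 0 := norm_ne_zero_iff.mpr hδ
    simp [this])

variable {δ : V} (hδ : δ ≠ 0)

lemma reflectionIn_apply (x : V) : reflectionIn hδ x = x - (2 * ⟪x, δ⟫ / ⟪δ, δ⟫) • δ := by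
  rw [reflectionIn, Module.reflection_apply]
  simp only [LinearMap.smul_apply, innerₛₗ_apply_apply, smul_eq_mul, real_inner_comm δ x]
  ring_nf

@[simp]
lemma reflectionIn_self : reflectionIn hδ δ = -δ :=
  Module.reflection_apply_self _

@[simp]
lemma reflectionIn_reflectionIn (x : V) : reflectionIn hδ (reflectionIn hδ x) = x :=
  Module.involutive_reflection _ x

end Reflection

variable (R : RootSystemBase V)

lemma coeff_eq_of_sum_eq {c c' : V → ℝ} (h : ∑ d ∈ R.Δ, c d • d = ∑ d ∈ R.Δ, c' d • d)
    {d : V} (hd : d ∈ R.Δ) : c d = c' d := by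
  have hind : LinearIndepOn ℝ id (R.Δ : Set V) := R.base_indep
  have := linearIndepOn_iff'.mp hind R.Δ (c - c') subset_rfl
    (by simp [sub_smul, Finset.sum_sub_distrib, h]) d hd
  simpa [sub_eq_zero] using this

lemma coeff_eq_of_sum_sub_smul_eq {c c' : V → ℝ} {δ : V} (hδ : δ ∈ R.Δ) (k : ℝ)
    (h : ∑ d ∈ R.Δ, c d • d - k • δ = ∑ d ∈ R.Δ, c' d • d) {d : V} (hd : d ∈ R.Δ)
    (hdδ : d ≠ δ) : c d = c' d := by
  classical
  have := R.coeff_eq_of_sum_eq (c := c) (c' := c' + Pi.single δ k) ?_ hd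
  · simpa [hdδ] using this
  · simp [add_smul, Finset.sum_add_distrib, Pi.single_apply, ite_smul, hδ, ← h]

section Roots

lemma reflectionIn_mem {α x : V} (hα : α ∈ R.Φ) (hx : x ∈ R.Φ) :
    reflectionIn (R.ne_zero α hα) x ∈ R.Φ := by
  rw [reflectionIn_apply]
  exact R.reflect_mem α hα x hx

lemma neg_mem {α : V} (hα : α ∈ R.Φ) : -α ∈ R.Φ := by
  simpa using R.reflectionIn_mem hα hα

lemma isPos_or_isNeg {α : V} (hα : α ∈ R.Φ) : R.IsPos α ∨ R.IsNeg α :=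
  (R.pos_or_neg α hα).imp (⟨hα, ·⟩) (⟨hα, ·⟩)

lemma isPos_of_mem_base {δ : V} (hδ : δ ∈ R.Δ) : R.IsPos δ := by
  classical
  exact ⟨R.base_sub hδ, Pi.single δ 1, fun d => by by_cases h : d = δ <;> simp [h],
    by simp [Pi.single_apply, ite_smul, hδ]⟩

variable {R}

lemma IsPos.not_isNeg {α : V} (hpos : R.IsPos α) : ¬ R.IsNeg α := by
  rintro ⟨-, c', hc', hα'⟩
  obtain ⟨hαΦ, c, hc, hα⟩ := hpos
  have hsum : ∑ d ∈ R.Δ, (c + c') d • d = ∑ d ∈ R.Δ, (0 : V → ℝ) d • d := by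
    have hc'α : ∑ d ∈ R.Δ, c' d • d = -α := by rw [hα', neg_neg]
    simp [add_smul, Finset.sum_add_distrib, ← hα, hc'α]
  have hc0 : ∀ d ∈ R.Δ, c d = 0 := fun d hd => by
    have := R.coeff_eq_of_sum_eq hsum hd
    simp only [Pi.add_apply, Pi.zero_apply] at this
    linarith [hc d, hc' d]
  exact R.ne_zero α hαΦ (hα ▸ Finset.sum_eq_zero fun d hd => by simp [hc0 d hd])

lemma IsPos.neg {α : V} (h : R.IsPos α) : R.IsNeg (-α) := by
  obtain ⟨hαΦ, c, hc, rfl⟩ := h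
  exact ⟨R.neg_mem hαΦ, c, hc, rfl⟩

lemma IsNeg.neg {α : V} (h : R.IsNeg α) : R.IsPos (-α) := by
  obtain ⟨hαΦ, c, hc, rfl⟩ := h
  exact ⟨R.neg_mem hαΦ, c, hc, neg_neg _⟩

end Roots

section SimpleReflection

noncomputable def simpleReflection {δ : V} (hδ : δ ∈ R.Δ) : V ≃ₗ[ℝ] V :=
  reflectionIn (R.ne_zero δ (R.base_sub hδ))

variable {R} {δ : V} (hδ : δ ∈ R.Δ)

lemma simpleReflection_apply (x : V) :
    R.simpleReflection hδ x = x - (2 * ⟪x, δ⟫ / ⟪δ, δ⟫) • δ :=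
  reflectionIn_apply _ x

@[simp]
lemma simpleReflection_self : R.simpleReflection hδ δ = -δ :=
  reflectionIn_self _

@[simp]
lemma simpleReflection_simpleReflection (x : V) :
    R.simpleReflection hδ (R.simpleReflection hδ x) = x :=
  reflectionIn_reflectionIn _ x

lemma simpleReflection_mem {x : V} (hx : x ∈ R.Φ) : R.simpleReflection hδ x ∈ R.Φ :=
  R.reflectionIn_mem (R.base_sub hδ) hx

lemma isPos_simpleReflection {γ : V} (hγ : R.IsPos γ) (hγδ : γ ≠ δ) :
    R.IsPos (R.simpleReflection hδ γ) := by
  refine (R.isPos_or_isNeg (simpleReflection_mem hδ hγ.1)).resolve_right ?_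
  rintro ⟨-, c', hc', hsγ⟩
  obtain ⟨hγΦ, c, hc, hγc⟩ := hγ
  have hsγc : ∑ d ∈ R.Δ, c d • d - (2 * ⟪γ, δ⟫ / ⟪δ, δ⟫) • δ = ∑ d ∈ R.Δ, (-c') d • d := by
    rw [← hγc, ← simpleReflection_apply hδ, hsγ]
    simp [neg_smul]
  have hc0 : ∀ d ∈ R.Δ, d ≠ δ → c d = 0 := fun d hd hdδ => by
    have := R.coeff_eq_of_sum_sub_smul_eq hδ _ hsγc hd hdδ
    simp only [Pi.neg_apply] at this
    linarith [hc d, hc' d]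
  have hγδ' : γ = c δ • δ :=
    hγc.trans (Finset.sum_eq_single_of_mem δ hδ fun d hd hdδ => by simp [hc0 d hd hdδ])
  rcases R.reduced δ (R.base_sub hδ) (c δ) (hγδ' ▸ hγΦ) with h1 | h1
  · exact hγδ (by rw [hγδ', h1, one_smul])
  · linarith [hc δ]

lemma Prec.simpleReflection {α β : V} (hβ : β ∈ R.Δ) (hβδ : β ≠ δ) (hβα : R.Prec β α)
    (hsα : R.IsPos (R.simpleReflection hδ α)) : R.Prec β (R.simpleReflection hδ α) := by
  obtain ⟨c, -, hαc, hcβ⟩ := hβα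
  obtain ⟨-, c', hc', hsαc⟩ := hsα
  refine ⟨c', hc', hsαc, ?_⟩
  have hsαc' : ∑ d ∈ R.Δ, c d • d - (2 * ⟪α, δ⟫ / ⟪δ, δ⟫) • δ = ∑ d ∈ R.Δ, c' d • d := by
    rw [← hsαc, simpleReflection_apply, hαc]
  rwa [← R.coeff_eq_of_sum_sub_smul_eq hδ _ hsαc' hβ hβδ]

end SimpleReflection

variable {R} in
lemma Prec.eq_of_mem_base {β δ : V} (hβ : β ∈ R.Δ) (hδ : δ ∈ R.Δ) (h : R.Prec β δ) : β = δ := by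
  obtain ⟨c, -, hδc, hcβ⟩ := h
  by_contra hβδ
  have := R.coeff_eq_of_sum_sub_smul_eq (c := c) (c' := 0) hδ 1 (by simp [← hδc]) hβ hβδ
  simp [this] at hcβ

section Cone

def IsNonneg (x : V) : Prop :=
  ∃ c : V → ℝ, (∀ d, 0 ≤ c d) ∧ x = ∑ d ∈ R.Δ, c d • d

lemma isNonneg_zero : R.IsNonneg 0 :=
  ⟨0, fun _ => le_rfl, by simp⟩

variable {R}

lemma IsNonneg.add {x y : V} (hx : R.IsNonneg x) (hy : R.IsNonneg y) : R.IsNonneg (x + y) := by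
  obtain ⟨c, hc, rfl⟩ := hx
  obtain ⟨c', hc', rfl⟩ := hy
  exact ⟨c + c', fun d => add_nonneg (hc d) (hc' d), by simp [add_smul, Finset.sum_add_distrib]⟩

lemma IsNonneg.smul {x : V} {t : ℝ} (hx : R.IsNonneg x) (ht : 0 ≤ t) : R.IsNonneg (t • x) := by
  obtain ⟨c, hc, rfl⟩ := hx
  exact ⟨t • c, fun d => mul_nonneg ht (hc d), by simp [Finset.smul_sum, smul_smul]⟩

lemma IsPos.map_of_forall_isPos_base {u : V →ₗ[ℝ] V} (hu : ∀ α ∈ R.Φ, u α ∈ R.Φ)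
    (hΔ : ∀ δ ∈ R.Δ, R.IsPos (u δ)) {α : V} (hα : R.IsPos α) : R.IsPos (u α) := by
  obtain ⟨hαΦ, c, hc, rfl⟩ := hα
  refine ⟨hu _ hαΦ, ?_⟩
  rw [map_sum]
  exact Finset.sum_induction _ R.IsNonneg (fun _ _ => IsNonneg.add) R.isNonneg_zero
    fun d hd => by rw [map_smul]; exact IsNonneg.smul (hΔ d hd).2 (hc d)

end Cone

section Inversions

def inversions (u : V → V) : Set V := {α | R.IsPos α ∧ R.IsNeg (u α)}

lemma inversions_finite (u : V → V) : (R.inversions u).Finite :=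
  R.Φ.finite_toSet.subset fun _ h => h.1.1

variable {R} {u : V →ₗ[ℝ] V}

lemma exists_mem_base_inversions (hu : ∀ α ∈ R.Φ, u α ∈ R.Φ) {α : V}
    (hα : α ∈ R.inversions u) : ∃ δ ∈ R.Δ, δ ∈ R.inversions u := by
  by_contra! h
  have hΔ : ∀ δ ∈ R.Δ, R.IsPos (u δ) := fun δ hδ =>
    (R.isPos_or_isNeg (hu δ (R.base_sub hδ))).resolve_right
      fun hneg => h δ hδ ⟨R.isPos_of_mem_base hδ, hneg⟩
  exact (hα.1.map_of_forall_isPos_base hu hΔ).not_isNeg hα.2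

variable {δ : V} (hδ : δ ∈ R.Δ)

lemma mapsTo_simpleReflection_inversions (hδu : δ ∈ R.inversions u) :
    Set.MapsTo (R.simpleReflection hδ) (R.inversions (u ∘ₗ (R.simpleReflection hδ).toLinearMap))
      (R.inversions u \ {δ}) := by
  rintro γ ⟨hγ, huγ⟩
  have hγδ : γ ≠ δ := by
    rintro rfl
    exact hδu.2.neg.not_isNeg (by simpa using huγ)
  refine ⟨⟨isPos_simpleReflection hδ hγ hγδ, huγ⟩, fun hsγ => ?_⟩
  have hγ' : γ = -δ := by simpa using congrArg (R.simpleReflection hδ) hsγ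
  exact hγ.not_isNeg (hγ' ▸ (R.isPos_of_mem_base hδ).neg)

lemma ncard_inversions_comp_simpleReflection_lt (hδu : δ ∈ R.inversions u) :
    (R.inversions (u ∘ₗ (R.simpleReflection hδ).toLinearMap)).ncard < (R.inversions u).ncard :=
  (Set.ncard_le_ncard_of_injOn _ (mapsTo_simpleReflection_inversions hδ hδu)
    (R.simpleReflection hδ).injective.injOn (R.inversions_finite u).sdiff).trans_lt
    (Set.ncard_sdiff_singleton_lt_of_mem hδu (R.inversions_finite u))

lemma span_inversions_comp_simpleReflection_le (hδu : δ ∈ R.inversions u) :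
    Submodule.span ℝ (R.inversions (u ∘ₗ (R.simpleReflection hδ).toLinearMap)) ≤
      Submodule.span ℝ (R.inversions u) := by
  rw [Submodule.span_le]
  intro γ hγ
  have hsγ := (mapsTo_simpleReflection_inversions hδ hδu hγ).1
  have hγ' : γ = R.simpleReflection hδ γ + (2 * ⟪γ, δ⟫ / ⟪δ, δ⟫) • δ := by
    rw [simpleReflection_apply]; abel
  rw [hγ']
  exact add_mem (Submodule.subset_span hsγ) (Submodule.smul_mem _ _ (Submodule.subset_span hδu))

end Inversions

theorem mem_span_inversions_of_prec {u : V →ₗ[ℝ] V} (hu : ∀ α ∈ R.Φ, u α ∈ R.Φ) {α β : V}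
    (hβ : β ∈ R.Δ) (hα : α ∈ R.inversions u) (hβα : R.Prec β α) :
    β ∈ Submodule.span ℝ (R.inversions u) := by
  induction hn : (R.inversions u).ncard using Nat.strong_induction_on generalizing u α with
  | _ n ih =>
    obtain ⟨δ, hδ, hδu⟩ := exists_mem_base_inversions hu hα
    rcases eq_or_ne β δ with rfl | hβδ
    · exact Submodule.subset_span hδu
    set s := R.simpleReflection hδ
    have hαδ : α ≠ δ := fun h => hβδ (Prec.eq_of_mem_base hβ hδ (h ▸ hβα))
    have hsα : s α ∈ R.inversions (u ∘ₗ s.toLinearMap) :=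
      ⟨isPos_simpleReflection hδ hα.1 hαδ, by simpa [s] using hα.2⟩
    have hus : ∀ x ∈ R.Φ, (u ∘ₗ s.toLinearMap) x ∈ R.Φ :=
      fun x hx => hu _ (simpleReflection_mem hδ hx)
    exact span_inversions_comp_simpleReflection_le hδ hδu <|
      ih _ (hn ▸ ncard_inversions_comp_simpleReflection_lt hδ hδu) hus hsα
        (hβα.simpleReflection hδ hβ hβδ hsα.1) rfl

end RootSystemBase

/-- Let `w` be an element of the Weyl group which is *regular*, i.e. for every simple
root `β` there is a positive root `α` with `w⁻¹α < 0` in whose simple-root expansion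
`β` occurs with positive coefficient. Then the positive roots `α` with `w⁻¹α < 0`
span `V`. -/
theorem regular_span_top {V : Type*} [NormedAddCommGroup V]
    [InnerProductSpace ℝ V] (R : RootSystemBase V) (w : V ≃ₗ[ℝ] V)
    (hw : ∀ α ∈ R.Φ, w α ∈ R.Φ ∧ w.symm α ∈ R.Φ)
    (hspan : Submodule.span ℝ (R.Δ : Set V) = ⊤)
    (hreg : ∀ β ∈ R.Δ, ∃ α : V, R.IsPos α ∧ R.IsNeg (w.symm α) ∧ R.Prec β α) :
    Submodule.span ℝ {α : V | R.IsPos α ∧ R.IsNeg (w.symm α)} = ⊤ := by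
  rw [← top_le_iff, ← hspan, Submodule.span_le]
  intro β hβ
  obtain ⟨α, hα, hwα, hβα⟩ := hreg β hβ
  exact R.mem_span_inversions_of_prec (u := w.symm.toLinearMap) (fun x hx => (hw x hx).2) hβ
    ⟨hα, hwα⟩ hβα
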